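/- arXiv:2604.01023 — 2 statements merged into one kernel-verified Lean document; each statement's English description precedes it below -/
import Mathlib

section
/- Suppose the kernel k on a compact metric space Ω is continuous, bounded, and characteristic. Then a sequence of probability measures p_n converges weakly to q if and only if MMD_k(p_n, q) = ‖μ_{p_n} − μ_q‖_H → 0. Consequently, a trajectory is ergodic with respect to q if and only if its ergodic MMD metric E_MMD(x,q,t) = ‖μ_{ρ_{x,t}} − μ_q‖²_H tends to 0 as t → ∞. -/
/-!
Everything rests on compactness of the space of Borel probability measures on a compact metric
space. The mean embedding `p ↦ ∫ φ dp` is continuous into the weak topology of `H`, and its values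
lie in the norm-compact closed convex hull of `φ(Ω)`, where the weak and norm topologies agree; so
it is norm-continuous. A continuous injection of a compact space into a Hausdorff space is an
embedding, hence `P n → Q` iff `μ (P n) → μ Q`. Ergodicity of a trajectory is weak convergence of
its occupation measures, whose mean embeddings are the time averages of `φ` along the trajectory.
-/

set_option autoImplicit false

open MeasureTheory Filter Set Topology ProbabilityTheory

lemma tendsto_sq_nhds_zero_iff {α : Type*} {l : Filter α} {g : α → ℝ} (hg : ∀ a, 0 ≤ g a) :
    Tendsto (fun a => g a ^ 2) l (𝓝 0) ↔ Tendsto g l (𝓝 0) :=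
  ⟨fun h => by simpa [Real.sqrt_sq (hg _)] using h.sqrt, fun h => by simpa using h.pow 2⟩

section WeakTopology

variable {E : Type*} [NormedAddCommGroup E] [NormedSpace ℝ E]

lemma isCompact_closure_convexHull [CompleteSpace E] {s : Set E} (hs : IsCompact s) :
    IsCompact (closure (convexHull ℝ s)) :=
  (totallyBounded_convexHull.2 hs.totallyBounded).closure.isCompact_of_isClosed isClosed_closure

lemma continuous_of_continuous_toWeakSpace {X : Type*} [TopologicalSpace X] {f : X → E}
    {K : Set E} (hK : IsCompact K) (hfK : ∀ x, f x ∈ K)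
    (hf : Continuous fun x => toWeakSpace ℝ E (f x)) : Continuous f := by
  have : CompactSpace K := isCompact_iff_compactSpace.mp hK
  have hemb : IsClosedEmbedding fun k : K => toWeakSpace ℝ E k :=
    ((toWeakSpaceCLM ℝ E).continuous.comp continuous_subtype_val).isClosedEmbedding
      ((toWeakSpace ℝ E).injective.comp Subtype.val_injective)
  have hfK' : Continuous fun x => (⟨f x, hfK x⟩ : K) := hemb.isInducing.continuous_iff.mpr hf
  exact continuous_subtype_val.comp hfK'

end WeakTopology

section MeanEmbedding

variable {Ω : Type*} [TopologicalSpace Ω] [CompactSpace Ω] [MeasurableSpace Ω]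
  [OpensMeasurableSpace Ω] {E : Type*} [NormedAddCommGroup E] [NormedSpace ℝ E] [CompleteSpace E]
  {φ : Ω → E}

lemma integral_mem_closure_convexHull_range (hφ : Continuous φ) (p : ProbabilityMeasure Ω) :
    ∫ ω, φ ω ∂(p : Measure Ω) ∈ closure (convexHull ℝ (range φ)) :=
  (convex_convexHull ℝ _).closure.integral_mem isClosed_closure
    (.of_forall fun ω => subset_closure (subset_convexHull ℝ _ (mem_range_self ω)))
    (hφ.integrable_of_hasCompactSupport (.of_compactSpace φ))

lemma continuous_toWeakSpace_integral (hφ : Continuous φ) :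
    Continuous fun p : ProbabilityMeasure Ω => toWeakSpace ℝ E (∫ ω, φ ω ∂(p : Measure Ω)) := by
  refine WeakBilin.continuous_of_continuous_eval _ fun l =>
    (ProbabilityMeasure.continuous_integral_continuousMap
      (⟨_, l.continuous.comp hφ⟩ : C(Ω, ℝ))).congr fun p => ?_
  exact l.integral_comp_comm (hφ.integrable_of_hasCompactSupport (.of_compactSpace φ))

lemma continuous_integral_probabilityMeasure (hφ : Continuous φ) :
    Continuous fun p : ProbabilityMeasure Ω => ∫ ω, φ ω ∂(p : Measure Ω) :=
  continuous_of_continuous_toWeakSpace (isCompact_closure_convexHull (isCompact_range hφ))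
    (integral_mem_closure_convexHull_range hφ) (continuous_toWeakSpace_integral hφ)

end MeanEmbedding

lemma isProbabilityMeasure_volume_cond_Ioc {a b : ℝ} (hab : a < b) :
    IsProbabilityMeasure (volume[|Ioc a b]) :=
  cond_isProbabilityMeasure_of_finite (by simp [hab]) (by simp)

section Occupation

variable {Ω : Type*} [TopologicalSpace Ω] [MeasurableSpace Ω] [BorelSpace Ω]

/-- The occupation measure `ρ_{γ,t}`: the law of `γ τ` for `τ` uniform on `(0, t]`. For `t ≤ 0`,
where that interval is empty, it is set to `δ_{γ 0}`. -/
noncomputable def occupationMeasure (γ : C(ℝ, Ω)) (t : ℝ) : ProbabilityMeasure Ω :=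
  if ht : 0 < t then
    ProbabilityMeasure.map ⟨volume[|Ioc 0 t], isProbabilityMeasure_volume_cond_Ioc ht⟩
      γ.continuous.aemeasurable
  else ⟨Measure.dirac (γ 0), inferInstance⟩

lemma toMeasure_occupationMeasure (γ : C(ℝ, Ω)) {t : ℝ} (ht : 0 < t) :
    (occupationMeasure γ t : Measure Ω) = (volume[|Ioc 0 t]).map γ := by
  simp only [occupationMeasure, ht, ↓reduceDIte]
  rfl

lemma integral_occupationMeasure {E : Type*} [NormedAddCommGroup E] [NormedSpace ℝ E]
    (γ : C(ℝ, Ω)) {t : ℝ} (ht : 0 < t) {f : Ω → E} (hf : StronglyMeasurable f) :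
    ∫ ω, f ω ∂(occupationMeasure γ t : Measure Ω) = t⁻¹ • ∫ τ in 0..t, f (γ τ) := by
  rw [toMeasure_occupationMeasure γ ht, integral_map γ.continuous.aemeasurable
    hf.aestronglyMeasurable, ProbabilityTheory.cond, integral_smul_measure,
    intervalIntegral.integral_of_le ht.le, Real.volume_Ioc, sub_zero, ENNReal.toReal_inv,
    ENNReal.toReal_ofReal ht.le]

lemma tendsto_occupationMeasure_iff [CompactSpace Ω] (γ : C(ℝ, Ω)) (q : ProbabilityMeasure Ω) :
    Tendsto (occupationMeasure γ) atTop (𝓝 q) ↔ ∀ f : Ω → ℝ, Continuous f →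
      Tendsto (fun t => t⁻¹ * ∫ τ in 0..t, f (γ τ)) atTop (𝓝 (∫ ω, f ω ∂(q : Measure Ω))) := by
  have hρ : ∀ f : Ω → ℝ, Continuous f → (fun t => ∫ ω, f ω ∂(occupationMeasure γ t : Measure Ω))
      =ᶠ[atTop] fun t => t⁻¹ * ∫ τ in 0..t, f (γ τ) := fun f hf => by
    filter_upwards [eventually_gt_atTop 0] with t ht
    exact integral_occupationMeasure γ ht hf.stronglyMeasurable
  rw [ProbabilityMeasure.tendsto_iff_forall_integral_tendsto]
  constructor
  · intro h f hf
    exact (h (.mkOfCompact ⟨f, hf⟩)).congr' (hρ f hf)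
  · intro h f
    exact (h f f.continuous).congr' (hρ f f.continuous).symm

end Occupation

/-- **MMD metrizes weak convergence for characteristic kernels, and ergodicity is
equivalent to vanishing ergodic MMD.** Let `k(ω,ω') = ⟪φ ω, φ ω'⟫` be a continuous
bounded kernel on a compact metric space `Ω` whose mean embedding (realized as
`μ p = ∫ φ dp`) is injective on Borel probability measures. Then
(a) a sequence `P n` of probability measures converges weakly to `Q` iff
`‖μ(P n) − μ Q‖ → 0`, and (b) a trajectory is ergodic w.r.t. `q` iff its ergodic MMD
metric `‖μ_{ρ_{x,t}} − μ_q‖² → 0` as `t → ∞`. -/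
theorem mmd_metrizes_weak_convergence_and_ergodicity
    {X : Type*} [TopologicalSpace X]
    {Ω : Type*} [MetricSpace Ω] [CompactSpace Ω] [MeasurableSpace Ω] [BorelSpace Ω]
    {H : Type*} [NormedAddCommGroup H] [InnerProductSpace ℝ H] [CompleteSpace H]
    (φ : Ω → H) (hφ : Continuous φ)
    (μ : ProbabilityMeasure Ω → H)
    (hμ : ∀ p : ProbabilityMeasure Ω, μ p = ∫ ω, φ ω ∂(p : Measure Ω))
    (hinj : Function.Injective μ)
    (σ : X → Ω) (hσ : Continuous σ) (x : ℝ → X) (hx : Continuous x)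
    (q : ProbabilityMeasure Ω)
    (μρ : ℝ → H)
    (hμρ : ∀ t : ℝ, 0 < t → μρ t = (1 / t) • ∫ τ in (0:ℝ)..t, φ (σ (x τ))) :
    (∀ (P : ℕ → ProbabilityMeasure Ω) (Q : ProbabilityMeasure Ω),
        Tendsto P atTop (nhds Q) ↔
          Tendsto (fun n => ‖μ (P n) - μ Q‖) atTop (nhds 0)) ∧
    ((∀ f : Ω → ℝ, Continuous f →
        Tendsto (fun t : ℝ => (1 / t) * ∫ τ in (0:ℝ)..t, f (σ (x τ))) atTop
          (nhds (∫ ω, f ω ∂(q : Measure Ω)))) ↔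
      Tendsto (fun t : ℝ => ‖μρ t - μ q‖ ^ 2) atTop (nhds 0)) := by
  have hμ_emb : IsClosedEmbedding μ :=
    (funext hμ ▸ continuous_integral_probabilityMeasure hφ).isClosedEmbedding hinj
  have h_mmd : ∀ {ι : Type} {l : Filter ι} (P : ι → ProbabilityMeasure Ω) Q,
      Tendsto P l (𝓝 Q) ↔ Tendsto (fun i => ‖μ (P i) - μ Q‖) l (𝓝 0) :=
    fun _ _ => hμ_emb.tendsto_nhds_iff.trans tendsto_iff_norm_sub_tendsto_zero
  refine ⟨h_mmd, ?_⟩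
  set γ : C(ℝ, Ω) := ⟨σ ∘ x, hσ.comp hx⟩
  have hμρ_eq : (fun t => ‖μ (occupationMeasure γ t) - μ q‖) =ᶠ[atTop] fun t => ‖μρ t - μ q‖ := by
    filter_upwards [eventually_gt_atTop 0] with t ht
    rw [hμ, integral_occupationMeasure γ ht hφ.stronglyMeasurable, hμρ t ht, one_div]
    rfl
  simp only [one_div]
  refine (tendsto_occupationMeasure_iff γ q).symm.trans ?_
  rw [h_mmd, tendsto_congr' hμρ_eq, tendsto_sq_nhds_zero_iff fun _ => norm_nonneg _]
end

section
/- (Barbalat's Lemma) If F : [0,∞) → ℝ is differentiable, lim_{t→∞} F(t) exists and is finite, and F' is uniformly continuous on [0,∞), then lim_{t→∞} F'(t) = 0. -/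
set_option autoImplicit false

open Filter

/-- **Barbalat's Lemma.** If `F : [0,∞) → ℝ` is differentiable with derivative `F'`,
`F(t)` converges to a finite limit as `t → ∞`, and `F'` is uniformly continuous on
`[0,∞)`, then `F'(t) → 0` as `t → ∞`. -/
theorem barbalat
    (F F' : ℝ → ℝ)
    (hF : ∀ t : ℝ, 0 ≤ t → HasDerivAt F (F' t) t)
    (L : ℝ) (hlim : Tendsto F atTop (nhds L))
    (hUC : UniformContinuousOn F' (Set.Ici 0)) :
    Tendsto F' atTop (nhds 0) := by
  rw [Metric.tendsto_atTop]
  by_contra hcon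
  push_neg at hcon
  obtain ⟨ε, hε, hcon⟩ := hcon
  obtain ⟨δ, hδ, hδ'⟩ := Metric.uniformContinuousOn_iff.mp hUC (ε/2) (by linarith)
  set h := δ/2 with hh
  have hh0 : 0 < h := by positivity
  rw [Metric.tendsto_atTop] at hlim
  obtain ⟨N, hN⟩ := hlim (ε * h / 4) (by positivity)
  obtain ⟨t₀, ht₀, ht₀'⟩ := hcon (max N 0)
  have ht0 : (0:ℝ) ≤ t₀ := le_trans (le_max_right N 0) ht₀
  have htN : N ≤ t₀ := le_trans (le_max_left N 0) ht₀
  rw [Real.dist_eq, sub_zero] at ht₀'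
  -- uniform continuity bound on the interval
  have key : ∀ t ∈ Set.Icc t₀ (t₀ + h), |F' t - F' t₀| < ε/2 := by
    intro t ht
    obtain ⟨h1, h2⟩ := ht
    have ht0' : (0:ℝ) ≤ t := le_trans ht0 h1
    have := hδ' t ht0' t₀ ht0 (by
      rw [Real.dist_eq, abs_of_nonneg (by linarith)]
      linarith)
    rwa [Real.dist_eq] at this
  have hcont : ContinuousOn F (Set.Icc t₀ (t₀ + h)) := by
    intro t ht
    exact ((hF t (le_trans ht0 ht.1)).continuousAt).continuousWithinAt
  have hdiff : DifferentiableOn ℝ F (interior (Set.Icc t₀ (t₀ + h))) := by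
    intro t ht
    rw [interior_Icc] at ht
    exact ((hF t (le_trans ht0 ht.1.le)).differentiableAt).differentiableWithinAt
  have hderiv : ∀ t ∈ interior (Set.Icc t₀ (t₀ + h)), deriv F t = F' t := by
    intro t ht
    rw [interior_Icc] at ht
    exact (hF t (le_trans ht0 ht.1.le)).deriv
  have hconv : Convex ℝ (Set.Icc t₀ (t₀ + h)) := convex_Icc _ _
  have hmem₁ : t₀ ∈ Set.Icc t₀ (t₀ + h) := ⟨le_refl _, by linarith⟩
  have hmem₂ : t₀ + h ∈ Set.Icc t₀ (t₀ + h) := ⟨by linarith, le_refl _⟩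
  -- F values are close to L
  have hF1 : |F t₀ - L| < ε * h / 4 := by
    have := hN t₀ htN; rwa [Real.dist_eq] at this
  have hF2 : |F (t₀ + h) - L| < ε * h / 4 := by
    have := hN (t₀ + h) (by linarith); rwa [Real.dist_eq] at this
  have habs1 := abs_lt.mp hF1
  have habs2 := abs_lt.mp hF2
  rcases le_or_gt ε (F' t₀) with hpos | hneg'
  · -- F' t₀ ≥ ε : derivative ≥ ε/2 on the interval
    have hge : ∀ t ∈ interior (Set.Icc t₀ (t₀ + h)), ε/2 ≤ deriv F t := by
      intro t ht
      rw [hderiv t ht]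
      rw [interior_Icc] at ht
      have := key t ⟨ht.1.le, ht.2.le⟩
      have := abs_lt.mp this
      linarith [this.1]
    have := hconv.mul_sub_le_image_sub_of_le_deriv hcont hdiff hge t₀ hmem₁
      (t₀ + h) hmem₂ (by linarith)
    have hsimp : ε/2 * (t₀ + h - t₀) = ε * h / 2 := by ring_nf
    rw [hsimp] at this
    linarith
  · have hneg : F' t₀ ≤ -ε := by
      rcases le_abs.mp ht₀' with h1 | h2
      · linarith
      · linarith
    have hle : ∀ t ∈ interior (Set.Icc t₀ (t₀ + h)), deriv F t ≤ -(ε/2) := by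
      intro t ht
      rw [hderiv t ht]
      rw [interior_Icc] at ht
      have := key t ⟨ht.1.le, ht.2.le⟩
      have := abs_lt.mp this
      linarith [this.2]
    have := hconv.image_sub_le_mul_sub_of_deriv_le hcont hdiff hle t₀ hmem₁
      (t₀ + h) hmem₂ (by linarith)
    have hsimp : -(ε/2) * (t₀ + h - t₀) = -(ε * h / 2) := by ring_nf
    rw [hsimp] at this
    linarith
end
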